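/- Let n ≥ 3. The real vector space ĝ₂ of maps C : Fin n → Fin n → Fin n → ℝ, written C^k_{i j} (one upper index, two lower indices), that are symmetric in the two lower indices and satisfy for all i, j, m the relations C^j_{i m} + C^i_{j m} − (2/n)·δ_{ij}·Σ_r C^r_{r m} = 0, has dimension n; more precisely, every such C is of the form C^k_{i j} = δ^k_i·a_j + δ^k_j·a_i − δ_{ij}·a_k for a unique vector a ∈ ℝⁿ, so that ĝ₂ is isomorphic to T* ≅ ℝⁿ. -/
import Mathlib


/-- The first prolongation `ĝ₂` of the conformal Killing symbol for the
Euclidean metric in dimension `n`: tensors `C^k_{ij}`, symmetric in the two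
lower indices, such that `C^j_{im} + C^i_{jm} − (2/n)·δ_{ij}·Σ_r C^r_{rm} = 0`
for all indices. -/
def g2hat (n : ℕ) : Submodule ℝ (Fin n → Fin n → Fin n → ℝ) where
  carrier := {C | (∀ k i j, C k i j = C k j i) ∧
    (∀ i j m, C j i m + C i j m
      - (2 / (n : ℝ)) * (if i = j then (1 : ℝ) else 0) * (∑ r, C r r m) = 0)}
  add_mem' := by
    rintro a b ⟨ha1, ha2⟩ ⟨hb1, hb2⟩
    constructor
    · intro k i j
      simp only [Pi.add_apply]
      linear_combination ha1 k i j + hb1 k i j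
    · intro i j m
      simp only [Pi.add_apply, Finset.sum_add_distrib]
      linear_combination ha2 i j m + hb2 i j m
  zero_mem' := by
    constructor
    · intro k i j; simp
    · intro i j m; simp
  smul_mem' := by
    rintro c a ⟨ha1, ha2⟩
    constructor
    · intro k i j
      simp only [Pi.smul_apply, smul_eq_mul]
      linear_combination c * ha1 k i j
    · intro i j m
      simp only [Pi.smul_apply, smul_eq_mul, ← Finset.mul_sum]
      linear_combination c * ha2 i j m


private def phiFun (n : ℕ) (a : Fin n → ℝ) : Fin n → Fin n → Fin n → ℝ :=
  fun k i j => (if k = i then (1 : ℝ) else 0) * a j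
    + (if k = j then (1 : ℝ) else 0) * a i
    - (if i = j then (1 : ℝ) else 0) * a k

private lemma delta_comm {n : ℕ} (i j : Fin n) :
    (if i = j then (1 : ℝ) else 0) = (if j = i then (1 : ℝ) else 0) := by
  simp [eq_comm]

private lemma sum_phi {n : ℕ} (a : Fin n → ℝ) (m : Fin n) :
    ∑ r, phiFun n a r r m = (n : ℝ) * a m := by
  simp [phiFun, Finset.sum_const, mul_comm]

private lemma phi_mem {n : ℕ} (hn : (n : ℝ) ≠ 0) (a : Fin n → ℝ) :
    phiFun n a ∈ g2hat n := by
  constructor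
  · intro k i j
    simp only [phiFun]
    rw [delta_comm i j]
    ring
  · intro i j m
    have hs := sum_phi a m
    simp only [phiFun] at hs ⊢
    rw [hs, delta_comm j i, delta_comm j m]
    field_simp
    split_ifs <;> ring

private lemma mem_form {n : ℕ} {C : Fin n → Fin n → Fin n → ℝ}
    (hC : C ∈ g2hat n) (k i j : Fin n) :
    C k i j = (if k = i then (1 : ℝ) else 0) * ((∑ r, C r r j) / n)
      + (if k = j then (1 : ℝ) else 0) * ((∑ r, C r r i) / n)
      - (if i = j then (1 : ℝ) else 0) * ((∑ r, C r r k) / n) := by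
  obtain ⟨h1, h2⟩ := hC
  linear_combination (1/2 : ℝ) * h2 k i j - (1/2 : ℝ) * h2 i j k
    + (1/2 : ℝ) * h2 k j i - (1/2 : ℝ) * h1 i k j - (1/2 : ℝ) * h1 j k i
    - (1/2 : ℝ) * h1 k j i

/-- For `n ≥ 3`, `ĝ₂` has dimension `n` over `ℝ`; more precisely, every
`C ∈ ĝ₂` is of the form `C^k_{ij} = δ^k_i a_j + δ^k_j a_i − δ_{ij} a_k` for a
unique vector `a ∈ ℝⁿ`, so that `ĝ₂ ≅ T* ≅ ℝⁿ`. -/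
theorem g2hat_finrank_and_form (n : ℕ) (hn : 3 ≤ n) :
    Module.finrank ℝ (g2hat n) = n ∧
    ∀ C ∈ g2hat n, ∃! a : Fin n → ℝ, ∀ k i j,
      C k i j = (if k = i then (1 : ℝ) else 0) * a j
        + (if k = j then (1 : ℝ) else 0) * a i
        - (if i = j then (1 : ℝ) else 0) * a k := by
  have hn0 : (n : ℝ) ≠ 0 := Nat.cast_ne_zero.mpr (by omega)
  constructor
  · let e : (Fin n → ℝ) ≃ₗ[ℝ] g2hat n :=
      { toFun := fun a => ⟨phiFun n a, phi_mem hn0 a⟩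
        map_add' := by
          intro a b
          apply Subtype.ext
          funext k i j
          simp [phiFun]
          split_ifs <;> ring
        map_smul' := by
          intro c a
          apply Subtype.ext
          funext k i j
          simp [phiFun]
          split_ifs <;> ring
        invFun := fun C => fun m => (∑ r, (C : Fin n → Fin n → Fin n → ℝ) r r m) / n
        left_inv := by
          intro a
          funext m
          simp only [sum_phi]
          field_simp
        right_inv := by
          intro C
          apply Subtype.ext
          funext k i j
          exact (mem_form C.2 k i j).symm }
    rw [← e.finrank_eq, Module.finrank_fin_fun]
  · intro C hC
    refine ⟨fun m => (∑ r, C r r m) / n, fun k i j => mem_form hC k i j, ?_⟩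
    intro b hb
    funext m
    have hsum : ∑ r, C r r m = (n : ℝ) * b m := by
      calc ∑ r, C r r m = ∑ _r : Fin n, b m :=
            Finset.sum_congr rfl (fun r _ => by rw [hb r r m]; simp)
        _ = (n : ℝ) * b m := by simp [mul_comm]
    rw [hsum]
    field_simp
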